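/- arXiv:1811.08227 — 2 statements merged into one kernel-verified Lean document; each statement's English description precedes it below -/
import Mathlib

section
/- Let A be a real m×d matrix, let P be a Moore–Penrose pseudoinverse of A, and let Y be a real m×q matrix. If a matrix Θ ∈ ℝ^{d×q} attains the minimal sum of squared errors, i.e. trace((A·Θ − Y)ᵀ·(A·Θ − Y)) = trace((A·(P·Y) − Y)ᵀ·(A·(P·Y) − Y)), then ‖P·Y‖_F ≤ ‖Θ‖_F; that is, the solution Θ̂ = P·Y has minimum norm among all matrices attaining the minimal sum of squared errors. -/
open Matrix

/-- The Frobenius norm of a real matrix `M`, defined by `‖M‖_F = √(trace (Mᵀ M))`. -/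
noncomputable def frobNorm {a b : ℕ} (M : Matrix (Fin a) (Fin b) ℝ) : ℝ :=
  Real.sqrt (Matrix.trace (Mᵀ * M))

lemma trace_tmul_eq_sum {a b : ℕ} (M : Matrix (Fin a) (Fin b) ℝ) :
    Matrix.trace (Mᵀ * M) = ∑ j, ∑ i, (M i j)^2 := by
  simp [Matrix.trace, Matrix.diag, Matrix.mul_apply, sq]

lemma trace_tmul_nonneg {a b : ℕ} (M : Matrix (Fin a) (Fin b) ℝ) :
    0 ≤ Matrix.trace (Mᵀ * M) := by
  rw [trace_tmul_eq_sum]; positivity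

lemma eq_zero_of_trace_tmul {a b : ℕ} (M : Matrix (Fin a) (Fin b) ℝ)
    (h : Matrix.trace (Mᵀ * M) = 0) : M = 0 := by
  rw [trace_tmul_eq_sum] at h
  ext i j
  have h1 : ∀ j ∈ Finset.univ, (0:ℝ) ≤ ∑ i, (M i j)^2 := fun j _ => by positivity
  have h2 := (Finset.sum_eq_zero_iff_of_nonneg h1).mp h j (Finset.mem_univ j)
  have h3 : ∀ i ∈ Finset.univ, (0:ℝ) ≤ (M i j)^2 := fun i _ => by positivity
  have := (Finset.sum_eq_zero_iff_of_nonneg h3).mp h2 i (Finset.mem_univ i)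
  simpa using pow_eq_zero_iff (n := 2) (by norm_num) |>.mp this

/-- Orthogonal expansion of `trace ((B+C)ᵀ (B+C))` when cross terms vanish. -/
lemma trace_add_of_cross {a b : ℕ} (B C : Matrix (Fin a) (Fin b) ℝ)
    (h : Bᵀ * C = 0) :
    Matrix.trace ((B + C)ᵀ * (B + C)) =
      Matrix.trace (Bᵀ * B) + Matrix.trace (Cᵀ * C) := by
  have h' : Cᵀ * B = 0 := by
    have := congrArg Matrix.transpose h
    simpa [Matrix.transpose_mul] using this
  have : (B + C)ᵀ * (B + C) = Bᵀ * B + (Bᵀ * C + (Cᵀ * B + Cᵀ * C)) := by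
    rw [Matrix.transpose_add, Matrix.add_mul, Matrix.mul_add, Matrix.mul_add]
    abel
  rw [this, h, h']
  simp [Matrix.trace_add]

/-- If `P` is a Moore–Penrose pseudoinverse of `A` and `Θ` attains the
minimal sum of squared errors `trace((A Θ - Y)ᵀ (A Θ - Y))`, then `‖P Y‖_F ≤ ‖Θ‖_F`:
the solution `Θ̂ = P Y` has minimum (Frobenius) norm among all minimizers. -/
theorem pinv_mul_is_min_norm_sse_minimizer
    {m d q : ℕ} (A : Matrix (Fin m) (Fin d) ℝ) (P : Matrix (Fin d) (Fin m) ℝ)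
    (h1 : A * P * A = A) (h2 : P * A * P = P)
    (h3 : (A * P)ᵀ = A * P) (h4 : (P * A)ᵀ = P * A)
    (Y : Matrix (Fin m) (Fin q) ℝ) (Θ : Matrix (Fin d) (Fin q) ℝ)
    (hmin : Matrix.trace ((A * Θ - Y)ᵀ * (A * Θ - Y)) =
      Matrix.trace ((A * (P * Y) - Y)ᵀ * (A * (P * Y) - Y))) :
    frobNorm (P * Y) ≤ frobNorm Θ := by
  set Ehat : Matrix (Fin m) (Fin q) ℝ := A * (P * Y) - Y with hEhat
  set D : Matrix (Fin m) (Fin q) ℝ := A * Θ - A * (P * Y) with hD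
  have hAtAP : Aᵀ * (A * P) = Aᵀ := by
    rw [← h3, ← Matrix.transpose_mul, h1]
  have hAtAP' : Aᵀ * A * P = Aᵀ := by rw [Matrix.mul_assoc, hAtAP]
  have hAtE : Aᵀ * Ehat = 0 := by
    rw [hEhat, Matrix.mul_sub, ← Matrix.mul_assoc, ← Matrix.mul_assoc, hAtAP', sub_self]
  have hcross : Dᵀ * Ehat = 0 := by
    rw [hD, ← Matrix.mul_sub, Matrix.transpose_mul, Matrix.mul_assoc, hAtE, Matrix.mul_zero]
  have hcrossE : Ehatᵀ * D = 0 := by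
    have := congrArg Matrix.transpose hcross
    simpa [Matrix.transpose_mul] using this
  have hED : A * Θ - Y = Ehat + D := by rw [hEhat, hD]; abel
  have hexp : Matrix.trace ((A * Θ - Y)ᵀ * (A * Θ - Y)) =
      Matrix.trace (Ehatᵀ * Ehat) + Matrix.trace (Dᵀ * D) := by
    rw [hED]; exact trace_add_of_cross Ehat D hcrossE
  have hDzero : D = 0 := by
    apply eq_zero_of_trace_tmul
    have h' : Matrix.trace (Ehatᵀ * Ehat) + Matrix.trace (Dᵀ * D) =
        Matrix.trace (Ehatᵀ * Ehat) := by rw [← hexp, hmin]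
    linarith
  have hAΘ : A * Θ = A * (P * Y) := by
    have h := hDzero; rw [hD] at h; exact sub_eq_zero.mp h
  have hPY : P * (A * Θ) = P * Y := by
    rw [hAΘ, ← Matrix.mul_assoc, ← Matrix.mul_assoc, h2]
  have hPt : Pᵀ * (P * A) = Pᵀ := by
    rw [← h4, ← Matrix.transpose_mul, h2]
  have key : Pᵀ * Θ = Pᵀ * (P * Y) := by
    calc Pᵀ * Θ = (Pᵀ * (P * A)) * Θ := by rw [hPt]
    _ = Pᵀ * (P * (A * Θ)) := by rw [Matrix.mul_assoc, Matrix.mul_assoc]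
    _ = Pᵀ * (P * Y) := by rw [hPY]
  have hcross2 : (P * Y)ᵀ * (Θ - P * Y) = 0 := by
    rw [Matrix.transpose_mul, Matrix.mul_sub, Matrix.mul_assoc, Matrix.mul_assoc, key,
      sub_self]
  have hΘdec : Θ = (P * Y) + (Θ - P * Y) := by abel
  have hexp2 : Matrix.trace (Θᵀ * Θ) =
      Matrix.trace ((P * Y)ᵀ * (P * Y)) + Matrix.trace ((Θ - P * Y)ᵀ * (Θ - P * Y)) := by
    conv_lhs => rw [hΘdec]
    exact trace_add_of_cross (P * Y) (Θ - P * Y) hcross2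
  have hle : Matrix.trace ((P * Y)ᵀ * (P * Y)) ≤ Matrix.trace (Θᵀ * Θ) := by
    have := trace_tmul_nonneg (Θ - P * Y)
    linarith
  exact Real.sqrt_le_sqrt hle
end

section
/- (Infinitude of feasible solutions for two-layer networks.) Let X ∈ ℝ^{m×(d+1)} satisfy X·X† = I_m (full row rank), let f_1, f_2 : ℝ → ℝ be bijective activations with inverses g_1, g_2, applied entrywise, let Y ∈ ℝ^{m×q} be a target, and let h_1 ≥ q ≥ 1. Then for every W_2 ∈ ℝ^{h_1×q} with linearly independent columns (equivalently W_2†·W_2 = I_q), the weight matrix W_1 = X†·g_1(g_2(Y)·W_2†) satisfies f_2(f_1(X·W_1)·W_2) = Y; consequently the set of pairs (W_1, W_2) of weight matrices for which the two-layer network f_2(f_1(X·W_1)·W_2) exactly equals Y is infinite. -/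
open Matrix

/-- `P` satisfies the four Penrose equations for `A` (Moore–Penrose pseudoinverse). -/
def IsMoorePenrose {a b : ℕ} (A : Matrix (Fin a) (Fin b) ℝ)
    (P : Matrix (Fin b) (Fin a) ℝ) : Prop :=
  A * P * A = A ∧ P * A * P = P ∧ (A * P)ᵀ = A * P ∧ (P * A)ᵀ = P * A

/-- **Infinitude of feasible solutions for two-layer networks.**
Let `X ∈ ℝ^{m×(d+1)}` have full row rank (`X·X† = I_m`), let `f₁, f₂` be bijective
entrywise activations with inverses `g₁, g₂`, let `Y ∈ ℝ^{m×q}` be a target and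
`h₁ ≥ q ≥ 1`.  Then for every `W₂ ∈ ℝ^{h₁×q}` with linearly independent columns
(`W₂†·W₂ = I_q`), the weight matrix `W₁ = X†·g₁(g₂(Y)·W₂†)` satisfies
`f₂(f₁(X·W₁)·W₂) = Y`; consequently the set of weight pairs `(W₁, W₂)` for which the
two-layer network output `f₂(f₁(X·W₁)·W₂)` exactly equals `Y` is infinite. -/
theorem two_layer_feasible_solutions_infinite
    {m d q h1 : ℕ} (hq : 1 ≤ q) (hh : q ≤ h1)
    (X : Matrix (Fin m) (Fin (d + 1)) ℝ)
    (Xp : Matrix (Fin (d + 1)) (Fin m) ℝ) (hXp : IsMoorePenrose X Xp)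
    (hfull : X * Xp = (1 : Matrix (Fin m) (Fin m) ℝ))
    (f1 g1 f2 g2 : ℝ → ℝ)
    (hg1f1 : Function.LeftInverse g1 f1) (hf1g1 : Function.RightInverse g1 f1)
    (hg2f2 : Function.LeftInverse g2 f2) (hf2g2 : Function.RightInverse g2 f2)
    (Y : Matrix (Fin m) (Fin q) ℝ) :
    (∀ (W2 : Matrix (Fin h1) (Fin q) ℝ) (W2p : Matrix (Fin q) (Fin h1) ℝ),
        IsMoorePenrose W2 W2p → W2p * W2 = (1 : Matrix (Fin q) (Fin q) ℝ) →
        ((X * (Xp * ((Y.map g2 * W2p).map g1))).map f1 * W2).map f2 = Y) ∧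
    {p : Matrix (Fin (d + 1)) (Fin h1) ℝ × Matrix (Fin h1) (Fin q) ℝ |
        ((X * p.1).map f1 * p.2).map f2 = Y}.Infinite := by
  have key : ∀ (W2 : Matrix (Fin h1) (Fin q) ℝ) (W2p : Matrix (Fin q) (Fin h1) ℝ),
      W2p * W2 = (1 : Matrix (Fin q) (Fin q) ℝ) →
      ((X * (Xp * ((Y.map g2 * W2p).map g1))).map f1 * W2).map f2 = Y := by
    intro W2 W2p h
    rw [← Matrix.mul_assoc, hfull, Matrix.one_mul]
    have h1' : ((Y.map g2 * W2p).map g1).map f1 = Y.map g2 * W2p := by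
      ext i j; simp [hf1g1 _]
    rw [h1', Matrix.mul_assoc, h, Matrix.mul_one]
    ext i j; simp [hf2g2 _]
  refine ⟨fun W2 W2p _ h => key W2 W2p h, ?_⟩
  set e : Fin q → Fin h1 := Fin.castLE hh with he
  have einj : Function.Injective e := Fin.castLE_injective hh
  set E : Matrix (Fin h1) (Fin q) ℝ := fun i j => if i = e j then 1 else 0 with hE
  have hEtE : Eᵀ * E = (1 : Matrix (Fin q) (Fin q) ℝ) := by
    ext j k
    simp only [Matrix.mul_apply, Matrix.transpose_apply, Matrix.one_apply]; simp only [hE]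
    rw [Finset.sum_eq_single (e j)]
    · by_cases hjk : j = k
      · subst hjk; simp
      · simp [einj.ne hjk, hjk]
    · intro b _ hb; simp [hb]
    · intro hb; exact absurd (Finset.mem_univ _) hb
  apply Set.infinite_of_injective_forall_mem
    (f := fun n : ℕ =>
      ((Xp * ((Y.map g2 * (((n : ℝ) + 1)⁻¹ • Eᵀ)).map g1), ((n : ℝ) + 1) • E) :
        Matrix (Fin (d + 1)) (Fin h1) ℝ × Matrix (Fin h1) (Fin q) ℝ))
  · intro a b hab
    have h2 := congrArg (fun p => p.2 (e ⟨0, hq⟩) ⟨0, hq⟩) hab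
    simp at h2; simp [hE] at h2
    exact_mod_cast h2
  · intro n
    have hn : ((n : ℝ) + 1) ≠ 0 := by positivity
    have hW : (((n : ℝ) + 1)⁻¹ • Eᵀ) * (((n : ℝ) + 1) • E) = 1 := by
      rw [Matrix.smul_mul, Matrix.mul_smul, smul_smul, inv_mul_cancel₀ hn, one_smul, hEtE]
    exact key _ _ hW
end
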